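/- arXiv:2008.10252 — 3 statements merged into one kernel-verified Lean document; each statement's English description precedes it below -/
import Mathlib

section
/- Let l, m ≥ 1, n = l + m, and let α_1, ..., α_l, β_1, ..., β_m be nonnegative reals, extended periodically (α indexed mod l, β indexed mod m). Define Ω = max_{i,j}(α_i + β_j), ω = min_{i,j}(α_i + β_j), and assume ω > 0. Let ψ^s = ρ_{r+1} ⋯ ρ_{r+s} for some fixed r and reals ρ_i > 1. If ω(ψ^n + 1) ≥ Ω(ψ^l + ψ^m), then α_{r+m+1}(ψ^n − ψ^m) − α_{r+1}(ψ^l − 1) + β_{r+l+1}(ψ^n − ψ^l) − β_{r+1}(ψ^m − 1) ≥ 0. -/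
open Finset

theorem stmt_3 (l m : ℕ) (hl : 1 ≤ l) (hm : 1 ≤ m) (n : ℕ) (hn : n = l + m)
    (α β : ℤ → ℝ) (hαper : ∀ i, α (i + l) = α i) (hβper : ∀ j, β (j + m) = β j)
    (hα0 : ∀ i, 0 ≤ α i) (hβ0 : ∀ j, 0 ≤ β j)
    (Ω ω : ℝ) (hΩ : ∀ i j : ℤ, α i + β j ≤ Ω) (hω : ∀ i j : ℤ, ω ≤ α i + β j)
    (hωpos : 0 < ω)
    (r : ℤ) (ρ : ℤ → ℝ) (hρ : ∀ i, 1 < ρ i)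
    (ψ : ℕ → ℝ) (hψ : ∀ s, ψ s = ∏ i ∈ Finset.range s, ρ (r + 1 + i))
    (hcond : ω * (ψ n + 1) ≥ Ω * (ψ l + ψ m)) :
    α (r + m + 1) * (ψ n - ψ m) - α (r + 1) * (ψ l - 1)
      + β (r + l + 1) * (ψ n - ψ l) - β (r + 1) * (ψ m - 1) ≥ 0 := by
  -- ψ is at least 1 everywhere
  have hψ1 : ∀ s, 1 ≤ ψ s := by
    intro s
    induction s with
    | zero => simp [hψ 0]
    | succ k ih =>
      have hk : ψ (k + 1) = ψ k * ρ (r + 1 + k) := by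
        rw [hψ (k + 1), hψ k, Finset.prod_range_succ]
      rw [hk]
      have h1 : (1 : ℝ) ≤ ρ (r + 1 + k) := le_of_lt (hρ _)
      nlinarith [hρ (r + 1 + (k : ℤ))]
  -- ψ is monotone
  have hmono : ∀ s t : ℕ, ψ s ≤ ψ (s + t) := by
    intro s t
    induction t with
    | zero => simp
    | succ k ih =>
      have hk : ψ (s + k + 1) = ψ (s + k) * ρ (r + 1 + (s + k)) := by
        rw [hψ (s + k + 1), hψ (s + k), Finset.prod_range_succ]
        push_cast; ring_nf
      have h1 : (1 : ℝ) < ρ (r + 1 + ((s : ℤ) + k)) := hρ _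
      have h2 : (1 : ℝ) ≤ ψ (s + k) := hψ1 _
      have : ψ (s + k) ≤ ψ (s + k + 1) := by
        rw [hk]; push_cast; nlinarith
      calc ψ s ≤ ψ (s + k) := ih
        _ ≤ ψ (s + k + 1) := this
      
  have hln : ψ l ≤ ψ n := by rw [hn]; exact hmono l m
  have hmn : ψ m ≤ ψ n := by
    rw [hn, Nat.add_comm]; exact hmono m l
  have hψl : (1 : ℝ) ≤ ψ l := hψ1 l
  have hψm : (1 : ℝ) ≤ ψ m := hψ1 m
  have hωΩ : ω ≤ Ω := le_trans (hω 0 0) (hΩ 0 0)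
  -- the four variables
  set A := α (r + m + 1) with hA
  set B := β (r + l + 1) with hB
  set a := α (r + 1) with ha
  set b := β (r + 1) with hb
  have h1 : ω ≤ A + b := hω (r + m + 1) (r + 1)
  have h2 : ω ≤ a + B := hω (r + 1) (r + l + 1)
  have h3 : ω ≤ A + B := hω (r + m + 1) (r + l + 1)
  have h4 : a + b ≤ Ω := hΩ (r + 1) (r + 1)
  have hA0 : 0 ≤ A := hα0 _
  have hB0 : 0 ≤ B := hβ0 _
  have ha0 : 0 ≤ a := hα0 _
  have hb0 : 0 ≤ b := hβ0 _
  rcases le_total (ψ m) (ψ l) with hc | hc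
  · -- case ψ m ≤ ψ l
    nlinarith [mul_nonneg (by linarith : (0:ℝ) ≤ A + B - ω) (by linarith : (0:ℝ) ≤ ψ n - ψ l),
      mul_nonneg (by linarith : (0:ℝ) ≤ Ω - a - b) (by linarith : (0:ℝ) ≤ ψ m - 1),
      mul_nonneg (by linarith : (0:ℝ) ≤ Ω - ω + A - a) (by linarith : (0:ℝ) ≤ ψ l - ψ m),
      mul_nonneg (by linarith : (0:ℝ) ≤ Ω - ω) (by linarith : (0:ℝ) ≤ ψ m)]
  · -- case ψ l ≤ ψ m
    nlinarith [mul_nonneg (by linarith : (0:ℝ) ≤ A + B - ω) (by linarith : (0:ℝ) ≤ ψ n - ψ m),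
      mul_nonneg (by linarith : (0:ℝ) ≤ Ω - a - b) (by linarith : (0:ℝ) ≤ ψ l - 1),
      mul_nonneg (by linarith : (0:ℝ) ≤ Ω - ω + B - b) (by linarith : (0:ℝ) ≤ ψ m - ψ l),
      mul_nonneg (by linarith : (0:ℝ) ≤ Ω - ω) (by linarith : (0:ℝ) ≤ ψ l)]
end

section
/- Let gcd(n, k) = 1 with k ≥ 1, and let u_r, U_r, χ_r (χ_r > 0) be real numbers indexed modulo k satisfying u_r − χ_r u_{r+n} = −U_r for all r, with χ_0 χ_1 ⋯ χ_{k-1} = C > 1. Then u_r = (1/(C−1)) [U_r + Σ_{j=1}^{k-1} (χ_r χ_{r+n} ⋯ χ_{r+(j-1)n}) U_{r+jn}] for every r. -/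
open Finset

lemma prod_range_zmod {k : ℕ} [NeZero k] (f : ZMod k → ℝ) :
    ∏ i ∈ Finset.range k, f (i : ZMod k) = ∏ x : ZMod k, f x := by
  have hk : 1 ≤ k := Nat.one_le_iff_ne_zero.2 (NeZero.ne k)
  refine Finset.prod_nbij (fun i => (i : ZMod k)) (fun i _ => Finset.mem_univ _)
    ?_ ?_ (fun i _ => rfl)
  · intro i hi j hj hij
    simp only [Finset.mem_coe, Finset.mem_range] at hi hj
    have := congrArg ZMod.val hij
    rwa [ZMod.val_natCast_of_lt hi, ZMod.val_natCast_of_lt hj] at this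
  · intro x _
    exact ⟨x.val, Finset.mem_coe.2 (Finset.mem_range.2 (ZMod.val_lt x)), by simp [ZMod.natCast_val, ZMod.cast_id]⟩

theorem stmt_12 (k : ℕ) (hk : 1 ≤ k) (n : ℕ) (hnk : Nat.Coprime n k)
    (χ U u : ZMod k → ℝ) (hχpos : ∀ r, 0 < χ r)
    (C : ℝ) (hC : 1 < C)
    (hprodC : ∏ i ∈ Finset.range k, χ (i : ZMod k) = C)
    (hrec : ∀ r : ZMod k, u r - χ r * u (r + n) = -U r) :
    ∀ r : ZMod k,
      u r = (1 / (C - 1)) *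
        (U r + ∑ j ∈ Finset.Ico 1 k,
          (∏ i ∈ Finset.range j, χ (r + (i : ZMod k) * (n : ZMod k))) *
            U (r + (j : ZMod k) * (n : ZMod k))) := by
  haveI : NeZero k := ⟨by omega⟩
  intro r
  -- iterated recursion
  have key : ∀ m : ℕ,
      u r = (∏ i ∈ Finset.range m, χ (r + (i : ZMod k) * n)) * u (r + (m : ZMod k) * n)
        - ∑ j ∈ Finset.range m, (∏ i ∈ Finset.range j, χ (r + (i : ZMod k) * n)) *
            U (r + (j : ZMod k) * n) := by
    intro m
    induction m with
    | zero => simp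
    | succ m ih =>
      have hr := hrec (r + (m : ZMod k) * n)
      have hstep : u (r + (m : ZMod k) * n)
          = χ (r + (m : ZMod k) * n) * u (r + ((m + 1 : ℕ) : ZMod k) * n)
            - U (r + (m : ZMod k) * n) := by
        have : r + ((m + 1 : ℕ) : ZMod k) * n = r + (m : ZMod k) * n + n := by
          push_cast; ring
        rw [this]; linarith
      rw [Finset.prod_range_succ, Finset.sum_range_succ]
      rw [ih, hstep]
      ring
  have hk0 : ((k : ZMod k) : ZMod k) = 0 := ZMod.natCast_self k
  -- product over full period equals C
  have hperm : ∏ i ∈ Finset.range k, χ (r + (i : ZMod k) * n) = C := by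
    rw [prod_range_zmod (fun x => χ (r + x * (n : ZMod k))), ← hprodC,
      prod_range_zmod χ]
    -- bijection x ↦ r + x * n
    have hu : IsUnit (n : ZMod k) := (ZMod.isUnit_iff_coprime n k).2 hnk
    obtain ⟨v, hv⟩ := hu
    calc ∏ x : ZMod k, χ (r + x * n)
        = ∏ x : ZMod k, χ ((Equiv.addLeft r) ((Units.mulRight v) x)) := by
          simp [hv]
      _ = ∏ x : ZMod k, χ x := by
          rw [← Equiv.prod_comp ((Units.mulRight v).trans (Equiv.addLeft r)) χ]; rfl
  have hkey := key k
  rw [hperm, hk0, zero_mul, add_zero] at hkey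
  set F : ℕ → ℝ := fun j => (∏ i ∈ Finset.range j, χ (r + (i : ZMod k) * n)) *
      U (r + (j : ZMod k) * n) with hF
  have hsum : ∑ j ∈ Finset.range k, F j = U r + ∑ j ∈ Finset.Ico 1 k, F j := by
    rw [Finset.range_eq_Ico, Finset.sum_eq_sum_Ico_succ_bot (by omega : 0 < k) F]
    simp [hF]
  rw [hsum] at hkey
  have hC1 : C - 1 ≠ 0 := by linarith
  field_simp
  linarith [hkey]
end

section
/- Let k' ≥ 1 and n' be coprime, and let χ^f_h > 0 (h mod k') satisfy χ^f_0 χ^f_1 ⋯ χ^f_{k'-1} = C with C > 1. If u^f_h − χ^f_h u^f_{h+n'} = −U^f_h for all h mod k', then (C − 1) u^f_h = U^f_h + Σ_{j=1}^{k'-1} (χ^f_h χ^f_{h+n'} ⋯ χ^f_{h+(j-1)n'}) U^f_{h+jn'}. -/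
open Finset

theorem stmt_15 (k' : ℕ) (hk' : 1 ≤ k') (n' : ℕ) (hcop : Nat.Coprime n' k')
    (χ u U : ZMod k' → ℝ) (hχpos : ∀ h, 0 < χ h)
    (C : ℝ) (hC : 1 < C)
    (hprodC : ∏ i ∈ Finset.range k', χ (i : ZMod k') = C)
    (hrec : ∀ h : ZMod k', u h - χ h * u (h + n') = -U h) :
    ∀ h : ZMod k',
      (C - 1) * u h =
        U h + ∑ j ∈ Finset.Ico 1 k',
          (∏ i ∈ Finset.range j, χ (h + (i : ZMod k') * (n' : ZMod k'))) *
            U (h + (j : ZMod k') * (n' : ZMod k')) := by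
  haveI : NeZero k' := ⟨by omega⟩
  intro h
  -- Step 1: iteration of the recurrence
  have key : ∀ m : ℕ, u h =
      (∏ i ∈ Finset.range m, χ (h + (i : ZMod k') * (n' : ZMod k'))) *
        u (h + (m : ZMod k') * (n' : ZMod k')) -
      ∑ j ∈ Finset.range m,
        (∏ i ∈ Finset.range j, χ (h + (i : ZMod k') * (n' : ZMod k'))) *
          U (h + (j : ZMod k') * (n' : ZMod k')) := by
    intro m
    induction m with
    | zero => simp
    | succ m ih =>
      have hr := hrec (h + (m : ZMod k') * (n' : ZMod k'))
      have hu : u (h + (m : ZMod k') * (n' : ZMod k')) =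
          χ (h + (m : ZMod k') * (n' : ZMod k')) *
            u (h + ((m : ℕ) + 1 : ℕ) * (n' : ZMod k')) -
          U (h + (m : ZMod k') * (n' : ZMod k')) := by
        have : h + (m : ZMod k') * (n' : ZMod k') + (n' : ZMod k') =
            h + ((m : ℕ) + 1 : ℕ) * (n' : ZMod k') := by push_cast; ring
        rw [← this]; linarith [hr]
      rw [Finset.prod_range_succ, Finset.sum_range_succ, ih, hu]
      push_cast
      ring
  have hk := key k'
  -- Step 2: h + k' * n' = h
  have hz : h + ((k' : ℕ) : ZMod k') * (n' : ZMod k') = h := by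
    simp [ZMod.natCast_self]
  rw [hz] at hk
  -- Step 3: the full product equals C
  have hbijcast : ∀ f : ZMod k' → ℝ,
      ∏ i ∈ Finset.range k', f (i : ZMod k') = ∏ x : ZMod k', f x := by
    intro f
    refine Finset.prod_nbij' (i := fun i : ℕ => ((i : ZMod k')))
      (j := fun x : ZMod k' => x.val) ?_ ?_ ?_ ?_ ?_
    · intro i hi; exact Finset.mem_univ _
    · intro x hx; exact Finset.mem_range.mpr (ZMod.val_lt x)
    · intro i hi
      exact ZMod.val_cast_of_lt (Finset.mem_range.mp hi)
    · intro x hx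
      exact ZMod.natCast_rightInverse x
    · intro i hi; rfl
  have hbij : Function.Bijective (fun x : ZMod k' => h + x * (n' : ZMod k')) := by
    have hinv : (n' : ZMod k') * (n' : ZMod k')⁻¹ = 1 :=
      ZMod.coe_mul_inv_eq_one n' hcop
    refine Function.bijective_iff_has_inverse.mpr
      ⟨fun y => (y - h) * (n' : ZMod k')⁻¹, fun x => ?_, fun y => ?_⟩
    · simp only [add_sub_cancel_left]
      rw [mul_assoc, hinv, mul_one]
    · simp only []
      rw [mul_assoc, mul_comm ((n' : ZMod k')⁻¹), hinv, mul_one, add_sub_cancel]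
  have hprod : ∏ i ∈ Finset.range k', χ (h + (i : ZMod k') * (n' : ZMod k')) = C := by
    rw [hbijcast (fun x => χ (h + x * (n' : ZMod k')))]
    rw [hbij.prod_comp χ]
    rw [← hbijcast χ, hprodC]
  rw [hprod] at hk
  -- Step 4: split off j = 0
  have hsplit : ∑ j ∈ Finset.range k',
      (∏ i ∈ Finset.range j, χ (h + (i : ZMod k') * (n' : ZMod k'))) *
        U (h + (j : ZMod k') * (n' : ZMod k')) =
      U h + ∑ j ∈ Finset.Ico 1 k',
      (∏ i ∈ Finset.range j, χ (h + (i : ZMod k') * (n' : ZMod k'))) *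
        U (h + (j : ZMod k') * (n' : ZMod k')) := by
    rw [Finset.range_eq_Ico, Finset.sum_eq_sum_Ico_succ_bot (by omega)]
    simp
  rw [hsplit] at hk
  linarith [hk]
end
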